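/- Let c > 0, consider the Hamiltonian H(p) = c|p|²/2 on ℝⁿ, and let u_T : ℝⁿ → ℝ be Lipschitz. Then there exists a Lipschitz function u0 : ℝⁿ → ℝ with S_T^+ u0 = u_T if and only if u_T is semiconcave with linear modulus and constant 1/(c·T). -/

import Mathlib

open scoped RealInnerProductSpace
open Filter

noncomputable section

/-- `n`-dimensional Euclidean space. -/
abbrev Euc (n : ℕ) := EuclideanSpace ℝ (Fin n)

/-- A real-valued function on `ℝⁿ` is Lipschitz (with some constant). -/
def IsLip {n : ℕ} (f : Euc n → ℝ) : Prop := ∃ K : NNReal, LipschitzWith K f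

/-- `f` is semiconcave with linear modulus and constant `C`:
`f(x+h) + f(x-h) - 2 f(x) ≤ C ‖h‖²` for all `x, h`. -/
def Semiconcave {n : ℕ} (f : Euc n → ℝ) (C : ℝ) : Prop :=
  ∀ x h : Euc n, f (x + h) + f (x - h) - 2 * f x ≤ C * ‖h‖ ^ 2

/-- The forward Hopf–Lax operator for the Hamiltonian `H(p) = c‖p‖²/2`:
`(S_T^+ g)(x) = inf_y [g(y) + ‖x-y‖²/(2cT)]`. -/
def SplusIso {n : ℕ} (T c : ℝ) (g : Euc n → ℝ) (x : Euc n) : ℝ :=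
  ⨅ y : Euc n, (g y + ‖x - y‖ ^ 2 / (2 * c * T))

/-!
`S_T^+ g` is the infimum over `y` of `x ↦ g y + ‖x - y‖²/(2cT)`, and by the parallelogram law each
of these has second difference exactly `‖h‖²/(cT)`; an infimum of such functions keeps the bound.
Conversely, semiconcavity of `u` with constant `1/(cT)` says that `φ = ‖·‖²/(2cT) - u` is midpoint
convex, hence convex since it is continuous. A subgradient `p` of `φ` at `x` (Hahn–Banach applied to
the epigraph) makes `x` a maximiser of `z ↦ u z - ‖z - y‖²/(2cT)` for `y = cT • p`, so with
`u₀ = S_T^- u := sup_z [u z - ‖z - ·‖²/(2cT)]` the infimum defining `(S_T^+ u₀)(x)` is attained at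
`y` with value `u x`.
-/

open Set

section MidpointConvex

variable {E : Type*} [AddCommGroup E] [Module ℝ E]

def MidpointConvex (f : E → ℝ) : Prop :=
  ∀ x h : E, 2 * f x ≤ f (x + h) + f (x - h)

lemma MidpointConvex.nonpos_of_mem_Icc {φ : ℝ → ℝ} (hφ : MidpointConvex φ)
    (hcont : Continuous φ) (h₀ : φ 0 ≤ 0) (h₁ : φ 1 ≤ 0) {t : ℝ} (ht : t ∈ Icc (0 : ℝ) 1) :
    φ t ≤ 0 := by
  obtain ⟨r, ⟨hr₀, hr₁⟩, hmax⟩ :=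
    isCompact_Icc.exists_isMaxOn (nonempty_Icc.2 zero_le_one) hcont.continuousOn
  -- at a maximiser `r`, midpoint convexity with step `min r (1 - r)` bounds `φ r` by the value
  -- at an endpoint
  have hr : φ r ≤ 0 := by
    rcases le_total r (1 - r) with h | h
    · have hmid := hφ r r
      have : φ (r + r) ≤ φ r := hmax ⟨by linarith, by linarith⟩
      rw [sub_self] at hmid
      linarith
    · have hmid := hφ r (1 - r)
      have : φ (r - (1 - r)) ≤ φ r := hmax ⟨by linarith, by linarith⟩
      rw [add_sub_cancel] at hmid
      linarith
  exact (hmax ht).trans hr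

variable [TopologicalSpace E] [ContinuousAdd E] [ContinuousSMul ℝ E]

lemma MidpointConvex.convexOn {f : E → ℝ} (hf : MidpointConvex f) (hcont : Continuous f) :
    ConvexOn ℝ univ f := by
  refine ⟨convex_univ, fun a _ b _ s t hs ht hst => ?_⟩
  set φ : ℝ → ℝ := fun r => f (a + r • (b - a)) - ((1 - r) * f a + r * f b)
  have hφ : MidpointConvex φ := fun r d => by
    have h := hf (a + r • (b - a)) (d • (b - a))
    simp only [φ, add_smul, sub_smul, ← add_assoc, ← add_sub_assoc] at h ⊢
    linarith
  have hφcont : Continuous φ := by fun_prop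
  obtain rfl : s = 1 - t := by linarith
  have hcomb : (1 - t) • a + t • b = a + t • (b - a) := by
    rw [sub_smul, one_smul, smul_sub]; abel
  have := hφ.nonpos_of_mem_Icc hφcont (by simp [φ]) (by simp [φ]) ⟨ht, by linarith⟩
  rw [hcomb, smul_eq_mul, smul_eq_mul]
  linarith

end MidpointConvex

section Subgradient

variable {E : Type*} [TopologicalSpace E] [AddCommGroup E] [Module ℝ E]
  [IsTopologicalAddGroup E] [ContinuousSMul ℝ E]

lemma ConvexOn.exists_subgradient {f : E → ℝ} (hf : ConvexOn ℝ univ f) (hcont : Continuous f)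
    (x : E) : ∃ ℓ : StrongDual ℝ E, ∀ z, f x + ℓ (z - x) ≤ f z := by
  have hopen : IsOpen {q : E × ℝ | q.1 ∈ univ ∧ f q.1 < q.2} := by
    simpa only [mem_univ, true_and] using
      isOpen_lt (by fun_prop : Continuous fun q : E × ℝ => f q.1) continuous_snd
  obtain ⟨F, hF⟩ := geometric_hahn_banach_point_open hf.convex_strict_epigraph hopen
    (x := (x, f x)) (by simp)
  set ℓ₀ : StrongDual ℝ E := F.comp (ContinuousLinearMap.inl ℝ E ℝ)
  set β := F (0, 1)
  have hsplit : ∀ z t, F (z, t) = ℓ₀ z + t * β := fun z t => by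
    rw [show (z, t) = (z, 0) + t • ((0 : E), (1 : ℝ)) by simp, map_add, map_smul, smul_eq_mul]
    rfl
  have hβ : 0 < β := by
    have := hF (x, f x + 1) (by simp)
    rw [hsplit, hsplit] at this
    linarith
  have hsep : ∀ z, ℓ₀ x + f x * β ≤ ℓ₀ z + f z * β := fun z => by
    refine le_of_forall_pos_lt_add fun ε hε => ?_
    have := hF (z, f z + ε / β) (by simp [hε, hβ])
    rw [hsplit, hsplit, add_mul, div_mul_cancel₀ _ hβ.ne'] at this
    linarith
  refine ⟨-β⁻¹ • ℓ₀, fun z => ?_⟩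
  have : f x - f z ≤ (ℓ₀ z - ℓ₀ x) / β := by
    rw [le_div_iff₀ hβ]; linarith [hsep z]
  rw [FunLike.coe_smul, Pi.smul_apply, map_sub, smul_eq_mul]
  rw [div_eq_inv_mul] at this
  linarith

end Subgradient

section HopfLax

variable {E : Type*} [NormedAddCommGroup E] {k : ℝ} {K : NNReal}

/-- `SplusIso T c = hopfLaxInf (2 * c * T)` definitionally. -/
def hopfLaxInf (k : ℝ) (g : E → ℝ) (x : E) : ℝ := ⨅ y, g y + ‖x - y‖ ^ 2 / k

/-- The backward Hopf–Lax operator `S_T^-`, for `k = 2cT`. -/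
def hopfLaxSup (k : ℝ) (u : E → ℝ) (y : E) : ℝ := ⨆ z, u z - ‖z - y‖ ^ 2 / k

lemma LipschitzWith.sub_le_add_sq_div {g : E → ℝ} (hg : LipschitzWith K g) (hk : 0 < k)
    (x y : E) : g x - K ^ 2 * k / 4 ≤ g y + ‖x - y‖ ^ 2 / k := by
  have hlip : g x ≤ g y + K * ‖x - y‖ := by simpa only [dist_eq_norm] using hg.le_add_mul x y
  have hamgm : K * ‖x - y‖ ≤ ‖x - y‖ ^ 2 / k + K ^ 2 * k / 4 := by
    rw [div_add' _ _ _ hk.ne', le_div_iff₀ hk]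
    nlinarith [sq_nonneg (‖x - y‖ - K * k / 2)]
  linarith

lemma LipschitzWith.bddBelow_hopfLaxInf {g : E → ℝ} (hg : LipschitzWith K g) (hk : 0 < k)
    (x : E) : BddBelow (range fun y => g y + ‖x - y‖ ^ 2 / k) :=
  ⟨g x - K ^ 2 * k / 4, forall_mem_range.2 (hg.sub_le_add_sq_div hk x)⟩

lemma LipschitzWith.bddAbove_hopfLaxSup {u : E → ℝ} (hu : LipschitzWith K u) (hk : 0 < k)
    (y : E) : BddAbove (range fun z => u z - ‖z - y‖ ^ 2 / k) :=
  ⟨u y + K ^ 2 * k / 4, forall_mem_range.2 fun z => by linarith [hu.sub_le_add_sq_div hk z y]⟩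

lemma LipschitzWith.hopfLaxSup {u : E → ℝ} (hu : LipschitzWith K u) (hk : 0 < k) :
    LipschitzWith K (hopfLaxSup k u) := by
  refine LipschitzWith.of_le_add_mul K fun y₁ y₂ => ciSup_le fun z => ?_
  -- compare with the translated competitor `z + (y₂ - y₁)` for `y₂`
  have hshift : z + (y₂ - y₁) - y₂ = z - y₁ := by abel
  have hsup := le_ciSup (hu.bddAbove_hopfLaxSup hk y₂) (z + (y₂ - y₁))
  have hlip := hu.le_add_mul z (z + (y₂ - y₁))
  rw [hshift] at hsup
  rw [dist_eq_norm, show z - (z + (y₂ - y₁)) = y₁ - y₂ by abel, ← dist_eq_norm] at hlip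
  unfold _root_.hopfLaxSup
  linarith

variable [InnerProductSpace ℝ E]

lemma LipschitzWith.hopfLaxInf_semiconcave {g : E → ℝ} (hg : LipschitzWith K g) (hk : 0 < k)
    (x h : E) :
    hopfLaxInf k g (x + h) + hopfLaxInf k g (x - h) - 2 * hopfLaxInf k g x ≤ 2 / k * ‖h‖ ^ 2 := by
  suffices (hopfLaxInf k g (x + h) + hopfLaxInf k g (x - h) - 2 / k * ‖h‖ ^ 2) / 2 ≤
      hopfLaxInf k g x by linarith
  refine le_ciInf fun y => ?_
  have hplus := ciInf_le (hg.bddBelow_hopfLaxInf hk (x + h)) y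
  have hminus := ciInf_le (hg.bddBelow_hopfLaxInf hk (x - h)) y
  have hpar := parallelogram_law_with_norm ℝ (x - y) h
  rw [show x - y + h = x + h - y by abel, show x - y - h = x - h - y by abel] at hpar
  have hsum : ‖x + h - y‖ ^ 2 / k + ‖x - h - y‖ ^ 2 / k =
      2 * (‖x - y‖ ^ 2 / k) + 2 / k * ‖h‖ ^ 2 := by
    linear_combination hpar / k
  unfold hopfLaxInf at *
  linarith

lemma midpointConvex_sq_div_sub {u : E → ℝ}
    (hu : ∀ x h, u (x + h) + u (x - h) - 2 * u x ≤ 2 / k * ‖h‖ ^ 2) :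
    MidpointConvex fun x => ‖x‖ ^ 2 / k - u x := fun x h => by
  have hpar := parallelogram_law_with_norm ℝ x h
  have hsum : ‖x + h‖ ^ 2 / k + ‖x - h‖ ^ 2 / k = 2 * (‖x‖ ^ 2 / k) + 2 / k * ‖h‖ ^ 2 := by
    linear_combination hpar / k
  linarith [hu x h]

lemma hopfLaxSup_le_of_subgradient {u : E → ℝ} (hk : k ≠ 0) {x p : E}
    (hp : ∀ z, ‖x‖ ^ 2 / k - u x + ⟪p, z - x⟫ ≤ ‖z‖ ^ 2 / k - u z) :
    hopfLaxSup k u ((k / 2) • p) ≤ u x - ‖x - (k / 2) • p‖ ^ 2 / k := by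
  refine ciSup_le fun z => ?_
  have hshift : ‖z - (k / 2) • p‖ ^ 2 / k - ‖x - (k / 2) • p‖ ^ 2 / k =
      ‖z‖ ^ 2 / k - ‖x‖ ^ 2 / k - ⟪p, z - x⟫ := by
    rw [norm_sub_sq_real, norm_sub_sq_real, real_inner_smul_right, real_inner_smul_right,
      inner_sub_right, real_inner_comm z p, real_inner_comm x p]
    field_simp
    ring
  linarith [hp z]

theorem hopfLaxInf_hopfLaxSup_of_semiconcave [CompleteSpace E] {u : E → ℝ}
    (hu : LipschitzWith K u) (hk : 0 < k)
    (hsc : ∀ x h, u (x + h) + u (x - h) - 2 * u x ≤ 2 / k * ‖h‖ ^ 2) :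
    hopfLaxInf k (hopfLaxSup k u) = u := by
  funext x
  have hcont : Continuous fun x => ‖x‖ ^ 2 / k - u x := by
    have := hu.continuous; fun_prop
  obtain ⟨ℓ, hℓ⟩ := ((midpointConvex_sq_div_sub hsc).convexOn hcont).exists_subgradient hcont x
  set p := (InnerProductSpace.toDual ℝ E).symm ℓ
  have hp : ∀ z, ‖x‖ ^ 2 / k - u x + ⟪p, z - x⟫ ≤ ‖z‖ ^ 2 / k - u z := by
    simpa only [p, InnerProductSpace.toDual_symm_apply] using hℓ
  refine le_antisymm ?_ (le_ciInf fun y => ?_)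
  · calc hopfLaxInf k (hopfLaxSup k u) x
        ≤ hopfLaxSup k u ((k / 2) • p) + ‖x - (k / 2) • p‖ ^ 2 / k :=
          ciInf_le ((hu.hopfLaxSup hk).bddBelow_hopfLaxInf hk x) _
      _ ≤ u x := by linarith [hopfLaxSup_le_of_subgradient hk.ne' hp]
  · have : u x - ‖x - y‖ ^ 2 / k ≤ hopfLaxSup k u y := le_ciSup (hu.bddAbove_hopfLaxSup hk y) x
    linarith

end HopfLax

theorem reachable_iff_semiconcave_isotropic
    {n : ℕ} (T : ℝ) (hT : 0 < T) (c : ℝ) (hc : 0 < c)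
    (uT : Euc n → ℝ) (huT : IsLip uT) :
    (∃ u0 : Euc n → ℝ, IsLip u0 ∧ SplusIso T c u0 = uT) ↔
      Semiconcave uT (1 / (c * T)) := by
  obtain ⟨K, hK⟩ := huT
  have hk : 0 < 2 * c * T := by positivity
  rw [show 1 / (c * T) = 2 / (2 * c * T) by field_simp]
  constructor
  · rintro ⟨u0, ⟨K₀, hK₀⟩, rfl⟩
    exact hK₀.hopfLaxInf_semiconcave hk
  · intro hsc
    exact ⟨hopfLaxSup (2 * c * T) uT, ⟨K, hK.hopfLaxSup hk⟩,
      hopfLaxInf_hopfLaxSup_of_semiconcave hK hk hsc⟩
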